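/- Let Θ ∈ H^∞_{B(E)}(𝔻) be an inner multiplier such that Θ(e^{iθ}) is invertible for almost every θ, Q_Θ = H²_E(𝔻) ⊖ ΘH²_E(𝔻), and S_Θ = P_{Q_Θ} T_z|_{Q_Θ}. If T ∈ B(Q_Θ) satisfies S_Θ* T S_Θ = T, then T = 0. -/

import Mathlib

open MeasureTheory Filter Topology ContinuousLinearMap

noncomputable section

/-- The circle group `ℝ / 2πℤ`. -/
abbrev OneTorus : Type := AddCircle (2 * Real.pi)

instance : Fact (0 < 2 * Real.pi) := ⟨by positivity⟩

/-- Normalized Haar (Lebesgue) measure on the circle. -/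
abbrev torusMeasure : Measure OneTorus := AddCircle.haarAddCircle

/-- Multiplication by a scalar `L^∞` function, as a bounded operator on a vector-valued
`L²` space. -/
def mulLp {α : Type*} [MeasurableSpace α] {μ : Measure α} {E : Type*}
    [NormedAddCommGroup E] [NormedSpace ℂ E]
    (φ : α → ℂ) (hφ : MemLp φ ⊤ μ) : Lp E 2 μ →L[ℂ] Lp E 2 μ :=
  LinearMap.mkContinuous
    { toFun := fun f => ((Lp.memLp f).smul (r := 2) hφ).toLp (φ • ⇑f)
      map_add' := fun f g => by
        apply Lp.ext
        filter_upwards [MemLp.coeFn_toLp ((Lp.memLp (f + g)).smul (r := 2) hφ),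
          MemLp.coeFn_toLp ((Lp.memLp f).smul (r := 2) hφ),
          MemLp.coeFn_toLp ((Lp.memLp g).smul (r := 2) hφ),
          Lp.coeFn_add f g,
          Lp.coeFn_add (((Lp.memLp f).smul (r := 2) hφ).toLp (φ • ⇑f))
            (((Lp.memLp g).smul (r := 2) hφ).toLp (φ • ⇑g))] with x h1 h2 h3 h4 h5
        simp only [h1, h5, Pi.add_apply, h2, h3, Pi.smul_apply, Pi.smul_apply', h4, smul_add]
      map_smul' := fun c f => by
        apply Lp.ext
        filter_upwards [MemLp.coeFn_toLp ((Lp.memLp (c • f)).smul (r := 2) hφ),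
          MemLp.coeFn_toLp ((Lp.memLp f).smul (r := 2) hφ),
          Lp.coeFn_smul c f,
          Lp.coeFn_smul c (((Lp.memLp f).smul (r := 2) hφ).toLp (φ • ⇑f))]
          with x h1 h2 h3 h4
        simp only [h1, h4, Pi.smul_apply, Pi.smul_apply', h2, h3, RingHom.id_apply]
        rw [smul_comm] }
    (eLpNorm φ ⊤ μ).toReal (fun f => by
      simp only [LinearMap.coe_mk, AddHom.coe_mk]
      rw [Lp.norm_toLp, Lp.norm_def, ← ENNReal.toReal_mul]
      refine ENNReal.toReal_mono ?_ ?_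
      · exact ENNReal.mul_ne_top hφ.eLpNorm_lt_top.ne (Lp.memLp f).eLpNorm_lt_top.ne
      · exact eLpNorm_smul_le_eLpNorm_top_mul_eLpNorm 2 (Lp.aestronglyMeasurable f) φ)

theorem fourier_smul_memℒp {E : Type*} [NormedAddCommGroup E] [NormedSpace ℂ E]
    (k : ℤ) (v : E) (p : ENNReal) :
    MemLp (fun x : OneTorus => fourier k x • v) p torusMeasure :=
  MemLp.mono_exponent
    (memLp_top_of_bound
      (((fourier k).continuous.smul continuous_const).aestronglyMeasurable) ‖v‖
      (Filter.Eventually.of_forall fun x => by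
        rw [norm_smul]
        simp [fourier_apply, Circle.norm_coe]))
    le_top

/-- The function `e^{ikθ} v` as an element of `L²_E(𝕋)`. -/
def vecCharLp (E : Type*) [NormedAddCommGroup E] [NormedSpace ℂ E] (k : ℤ) (v : E) :
    Lp E 2 torusMeasure :=
  (fourier_smul_memℒp k v 2).toLp _

/-- The vector-valued Hardy space `H²_E(𝔻)`, identified with the closed subspace of
`L²_E(𝕋)` spanned by the functions `e^{ikθ} v` with `k ≥ 0`. -/
def HardyDisc (E : Type*) [NormedAddCommGroup E] [NormedSpace ℂ E] :
    Submodule ℂ (Lp E 2 torusMeasure) :=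
  (Submodule.span ℂ
    (Set.range fun p : ℕ × E => vecCharLp E (p.1 : ℤ) p.2)).topologicalClosure

instance {E : Type*} [NormedAddCommGroup E] [NormedSpace ℂ E] [CompleteSpace E] :
    CompleteSpace (HardyDisc E) :=
  IsClosed.completeSpace_coe (hs := Submodule.isClosed_topologicalClosure _)

/-- The orthogonal projection of `L²_E(𝕋)` onto `H²_E(𝔻)`. -/
def discProj (E : Type*) [NormedAddCommGroup E] [InnerProductSpace ℂ E] [CompleteSpace E] :
    Lp E 2 torusMeasure →L[ℂ] HardyDisc E :=
  Submodule.orthogonalProjectionOnto (HardyDisc E)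

theorem fourierOne_memℒp : MemLp (fun x : OneTorus => (fourier 1 x : ℂ)) ⊤ torusMeasure :=
  memLp_top_of_bound (fourier 1).continuous.aestronglyMeasurable 1
    (Filter.Eventually.of_forall fun x => by simp [fourier_apply, Circle.norm_coe])

/-- The shift `T_z` (multiplication by `e^{iθ}`) on `H²_E(𝔻)`. -/
def discShift (E : Type*) [NormedAddCommGroup E] [InnerProductSpace ℂ E] [CompleteSpace E] :
    HardyDisc E →L[ℂ] HardyDisc E :=
  discProj E ∘L mulLp (fun x => fourier 1 x) fourierOne_memℒp ∘L (HardyDisc E).subtypeL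

/-- The adjoint `T_z^*` of the shift on `H²_E(𝔻)`. -/
def discShiftStar (E : Type*) [NormedAddCommGroup E] [InnerProductSpace ℂ E]
    [CompleteSpace E] : HardyDisc E →L[ℂ] HardyDisc E :=
  ContinuousLinearMap.adjoint (𝕜 := ℂ) (E := ↥(HardyDisc E)) (F := ↥(HardyDisc E))
    (discShift E)

section OpMul

variable {E : Type*} [NormedAddCommGroup E] [NormedSpace ℂ E]

noncomputable instance : IsBoundedSMul (E →L[ℂ] E) E :=
  IsBoundedSMul.of_norm_smul_le fun Φ v => Φ.le_opNorm v

instance : SMulCommClass ℂ (E →L[ℂ] E) E :=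
  ⟨fun c Φ v => (Φ.map_smul c v).symm⟩

/-- Multiplication by an operator-valued `L^∞` function `Φ ∈ L^∞_{B(E)}(𝕋)`, as a bounded
operator on `L²_E(𝕋)`. -/
def opMulLp {α : Type*} [MeasurableSpace α] {μ : Measure α}
    (Φ : α → E →L[ℂ] E) (hΦ : MemLp Φ ⊤ μ) : Lp E 2 μ →L[ℂ] Lp E 2 μ :=
  LinearMap.mkContinuous
    { toFun := fun f => ((Lp.memLp f).smul (r := 2) hΦ).toLp (Φ • ⇑f)
      map_add' := fun f g => by
        apply Lp.ext
        filter_upwards [MemLp.coeFn_toLp ((Lp.memLp (f + g)).smul (r := 2) hΦ),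
          MemLp.coeFn_toLp ((Lp.memLp f).smul (r := 2) hΦ),
          MemLp.coeFn_toLp ((Lp.memLp g).smul (r := 2) hΦ),
          Lp.coeFn_add f g,
          Lp.coeFn_add (((Lp.memLp f).smul (r := 2) hΦ).toLp (Φ • ⇑f))
            (((Lp.memLp g).smul (r := 2) hΦ).toLp (Φ • ⇑g))] with x h1 h2 h3 h4 h5
        simp only [h1, h5, Pi.add_apply, h2, h3, Pi.smul_apply, Pi.smul_apply', h4, smul_add]
      map_smul' := fun c f => by
        apply Lp.ext
        filter_upwards [MemLp.coeFn_toLp ((Lp.memLp (c • f)).smul (r := 2) hΦ),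
          MemLp.coeFn_toLp ((Lp.memLp f).smul (r := 2) hΦ),
          Lp.coeFn_smul c f,
          Lp.coeFn_smul c (((Lp.memLp f).smul (r := 2) hΦ).toLp (Φ • ⇑f))]
          with x h1 h2 h3 h4
        simp only [h1, h4, Pi.smul_apply, Pi.smul_apply', h2, h3, RingHom.id_apply]
        rw [smul_comm] }
    (eLpNorm Φ ⊤ μ).toReal (fun f => by
      simp only [LinearMap.coe_mk, AddHom.coe_mk]
      rw [Lp.norm_toLp, Lp.norm_def, ← ENNReal.toReal_mul]
      refine ENNReal.toReal_mono ?_ ?_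
      · exact ENNReal.mul_ne_top hΦ.eLpNorm_lt_top.ne (Lp.memLp f).eLpNorm_lt_top.ne
      · exact eLpNorm_smul_le_eLpNorm_top_mul_eLpNorm 2 (Lp.aestronglyMeasurable f) Φ)

end OpMul

/-- `T ∈ B(H²_E(𝔻))` is a Toeplitz operator: `T = P M_Φ|_{H²_E(𝔻)}` for some
operator-valued symbol `Φ ∈ L^∞_{B(E)}(𝕋)`. -/
def IsVecToeplitz {E : Type*} [NormedAddCommGroup E] [InnerProductSpace ℂ E] [CompleteSpace E]
    (T : HardyDisc E →L[ℂ] HardyDisc E) : Prop :=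
  ∃ (Φ : OneTorus → E →L[ℂ] E) (hΦ : MemLp Φ ⊤ torusMeasure),
    ∀ f : HardyDisc E, T f = discProj E (opMulLp Φ hΦ (f : Lp E 2 torusMeasure))

section VecModel

variable {E : Type*} [NormedAddCommGroup E] [InnerProductSpace ℂ E] [CompleteSpace E]
  (Θ : OneTorus → E →L[ℂ] E) (hΘ : MemLp Θ ⊤ torusMeasure)
  (hmap : ∀ f : HardyDisc E, opMulLp Θ hΘ (f : Lp E 2 torusMeasure) ∈ HardyDisc E)

/-- The subspace `Θ H²_E(𝔻)` of `H²_E(𝔻)`, for an analytic multiplier `Θ` (encoded by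
the hypothesis `hmap` that multiplication by `Θ` preserves `H²_E(𝔻)`). -/
def vecThetaRange : Submodule ℂ (HardyDisc E) :=
  LinearMap.range
    ((((opMulLp Θ hΘ) ∘L (HardyDisc E).subtypeL).codRestrict (HardyDisc E)
        fun f => hmap f) : HardyDisc E →ₗ[ℂ] HardyDisc E)

/-- The model space `Q_Θ = H²_E(𝔻) ⊖ Θ H²_E(𝔻)`. -/
def vecModelSpace : Submodule ℂ (HardyDisc E) := (vecThetaRange Θ hΘ hmap)ᗮ

instance : CompleteSpace (vecModelSpace Θ hΘ hmap) :=
  IsClosed.completeSpace_coe (hs := Submodule.isClosed_orthogonal _)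

/-- The compressed shift `S_Θ = P_{Q_Θ} T_z|_{Q_Θ}` on the model space. -/
def vecModelShift : vecModelSpace Θ hΘ hmap →L[ℂ] vecModelSpace Θ hΘ hmap :=
  ContinuousLinearMap.comp
    (Submodule.orthogonalProjectionOnto (𝕜 := ℂ) (E := ↥(HardyDisc E)) (vecModelSpace Θ hΘ hmap))
    (ContinuousLinearMap.comp (discShift E) ((vecModelSpace Θ hΘ hmap).subtypeL))

/-- The adjoint `S_Θ^*` of the compressed shift. -/
def vecModelShiftStar : vecModelSpace Θ hΘ hmap →L[ℂ] vecModelSpace Θ hΘ hmap :=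
  ContinuousLinearMap.adjoint (𝕜 := ℂ) (E := ↥(vecModelSpace Θ hΘ hmap))
    (F := ↥(vecModelSpace Θ hΘ hmap)) (vecModelShift Θ hΘ hmap)

end VecModel



section Aux1

variable {E : Type*} [NormedAddCommGroup E] [NormedSpace ℂ E]

theorem opMulLp_coeFn {α : Type*} [MeasurableSpace α] {μ : Measure α}
    (Φ : α → E →L[ℂ] E) (hΦ : MemLp Φ ⊤ μ) (f : Lp E 2 μ) :
    opMulLp Φ hΦ f =ᵐ[μ] fun x => Φ x (f x) := by
  filter_upwards [MemLp.coeFn_toLp ((Lp.memLp f).smul (r := 2) hΦ)] with x hx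
  have hx' : ((opMulLp Φ hΦ f : Lp E 2 μ) : α → E) x = (Φ • ⇑f) x := hx
  simpa using hx'

theorem mulLp_coeFn {α : Type*} [MeasurableSpace α] {μ : Measure α}
    (φ : α → ℂ) (hφ : MemLp φ ⊤ μ) (f : Lp E 2 μ) :
    mulLp (E := E) φ hφ f =ᵐ[μ] fun x => φ x • f x := by
  filter_upwards [MemLp.coeFn_toLp ((Lp.memLp f).smul (r := 2) hφ)] with x hx
  have hx' : ((mulLp (E := E) φ hφ f : Lp E 2 μ) : α → E) x = (φ • ⇑f) x := hx
  simpa using hx'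

theorem vecCharLp_coeFn (k : ℤ) (v : E) :
    vecCharLp E k v =ᵐ[torusMeasure] fun x => fourier k x • v :=
  MemLp.coeFn_toLp _

theorem norm_fourier (k : ℤ) (x : OneTorus) : ‖(fourier k x : ℂ)‖ = 1 := by
  simp [fourier_apply, Circle.norm_coe]

end Aux1


section Aux2

variable {E : Type*} [NormedAddCommGroup E] [NormedSpace ℂ E]

/-- The shift on `L²_E(𝕋)`: multiplication by `e^{iθ}`. -/
def MzL (E : Type*) [NormedAddCommGroup E] [NormedSpace ℂ E] :
    Lp E 2 torusMeasure →L[ℂ] Lp E 2 torusMeasure :=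
  mulLp (fun x => fourier 1 x) fourierOne_memℒp

theorem MzL_vecCharLp (k : ℤ) (v : E) :
    MzL E (vecCharLp E k v) = vecCharLp E (k + 1) v := by
  apply Lp.ext
  filter_upwards [mulLp_coeFn _ fourierOne_memℒp (vecCharLp E k v),
    vecCharLp_coeFn k v, vecCharLp_coeFn (k + 1) v] with x h1 h2 h3
  rw [show MzL E = mulLp (fun x => fourier 1 x) fourierOne_memℒp from rfl]
  rw [h1, h2, h3, smul_smul, ← fourier_add]
  norm_num [add_comm]

theorem opMulLp_norm_of_isometry {α : Type*} [MeasurableSpace α] {μ : Measure α}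
    (Φ : α → E →L[ℂ] E) (hΦ : MemLp Φ ⊤ μ)
    (h : ∀ᵐ x ∂μ, ∀ v : E, ‖Φ x v‖ = ‖v‖) (f : Lp E 2 μ) :
    ‖opMulLp Φ hΦ f‖ = ‖f‖ := by
  rw [Lp.norm_def, Lp.norm_def]
  congr 1
  rw [eLpNorm_congr_ae (opMulLp_coeFn Φ hΦ f)]
  apply eLpNorm_congr_norm_ae
  filter_upwards [h] with x hx
  exact hx _

theorem MzL_norm (f : Lp E 2 torusMeasure) : ‖MzL E f‖ = ‖f‖ := by
  rw [MzL, Lp.norm_def, Lp.norm_def]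
  congr 1
  rw [eLpNorm_congr_ae (mulLp_coeFn _ fourierOne_memℒp f)]
  apply eLpNorm_congr_norm_ae
  refine Eventually.of_forall fun x => ?_
  rw [norm_smul, norm_fourier, one_mul]

theorem vecCharLp_mem_hardy {k : ℤ} (hk : 0 ≤ k) (v : E) :
    vecCharLp E k v ∈ HardyDisc E := by
  have : vecCharLp E k v = vecCharLp E ((k.toNat : ℕ) : ℤ) v := by
    rw [Int.toNat_of_nonneg hk]
  rw [this]
  exact Submodule.le_topologicalClosure _ (Submodule.subset_span ⟨(k.toNat, v), rfl⟩)

theorem MzL_mem_hardy {f : Lp E 2 torusMeasure} (hf : f ∈ HardyDisc E) :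
    MzL E f ∈ HardyDisc E := by
  revert f
  suffices h : HardyDisc E ≤ Submodule.comap (MzL E : Lp E 2 torusMeasure →ₗ[ℂ] _)
      (HardyDisc E) by
    intro f hf; exact h hf
  refine Submodule.topologicalClosure_minimal _ ?_ ?_
  · rw [Submodule.span_le]
    rintro _ ⟨⟨n, v⟩, rfl⟩
    simp only [SetLike.mem_coe, Submodule.mem_comap, ContinuousLinearMap.coe_coe]
    rw [MzL_vecCharLp]
    exact vecCharLp_mem_hardy (by positivity) v
  · exact IsClosed.preimage (MzL E).continuous (Submodule.isClosed_topologicalClosure _)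

theorem MzL_opMulLp_comm (Φ : OneTorus → E →L[ℂ] E) (hΦ : MemLp Φ ⊤ torusMeasure)
    (f : Lp E 2 torusMeasure) :
    MzL E (opMulLp Φ hΦ f) = opMulLp Φ hΦ (MzL E f) := by
  apply Lp.ext
  filter_upwards [mulLp_coeFn _ fourierOne_memℒp (opMulLp Φ hΦ f),
    opMulLp_coeFn Φ hΦ f, opMulLp_coeFn Φ hΦ (MzL E f),
    mulLp_coeFn _ fourierOne_memℒp f] with x h1 h2 h3 h4
  simp only [show MzL E = mulLp (fun x => fourier 1 x) fourierOne_memℒp from rfl] at h3 ⊢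
  rw [h1, h2, h3, h4, ContinuousLinearMap.map_smul]

end Aux2


section Aux3

theorem ae_zero_of_fourierCoeff_eq_zero {φ : OneTorus → ℂ} (hφ : MemLp φ 2 torusMeasure)
    (h : ∀ n : ℤ, fourierCoeff φ n = 0) : φ =ᵐ[torusMeasure] 0 := by
  have hcongr : ∀ n : ℤ, fourierCoeff (⇑(hφ.toLp φ) : OneTorus → ℂ) n = fourierCoeff φ n := by
    intro n
    unfold fourierCoeff
    apply integral_congr_ae
    filter_upwards [hφ.coeFn_toLp] with x hx
    rw [hx]
  have h0 : hφ.toLp φ = 0 := by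
    rw [← (LinearIsometryEquiv.map_eq_zero_iff fourierBasis.repr)]
    apply lp.ext
    funext n
    rw [fourierBasis_repr, hcongr n, h n]
    simp
  have := hφ.coeFn_toLp
  rw [h0] at this
  filter_upwards [this.symm, Lp.coeFn_zero ℂ 2 torusMeasure] with x h1 h2
  rw [h1, h2]

variable {E : Type*} [NormedAddCommGroup E] [InnerProductSpace ℂ E] [CompleteSpace E]

theorem span_intChar_dense :
    (Submodule.span ℂ
      (Set.range fun p : ℤ × E => vecCharLp E p.1 p.2)).topologicalClosure = ⊤ := by
  rw [Submodule.topologicalClosure_eq_top_iff, Submodule.eq_bot_iff]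
  intro f hf
  have hcoeff : ∀ (v : E) (k : ℤ),
      fourierCoeff (fun x => (inner ℂ v (f x) : ℂ)) k = 0 := by
    intro v k
    have h0 : (inner ℂ (vecCharLp E k v) f : ℂ) = 0 :=
      (Submodule.mem_orthogonal _ f).1 hf _
        (Submodule.subset_span ⟨(k, v), rfl⟩)
    rw [MeasureTheory.L2.inner_def] at h0
    rw [fourierCoeff, ← h0]
    apply integral_congr_ae
    filter_upwards [vecCharLp_coeFn k v] with x hx
    rw [hx, inner_smul_left, fourier_neg, smul_eq_mul]
  obtain ⟨g, hgm, hfg⟩ := Lp.aestronglyMeasurable f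
  obtain ⟨c, hc, hsc⟩ := hgm.isSeparable_range
  have hae : ∀ v : E, ∀ᵐ x ∂torusMeasure, (inner ℂ v (g x) : ℂ) = 0 := by
    intro v
    have hmem : MemLp (fun x => (inner ℂ v (f x) : ℂ)) 2 torusMeasure :=
      (innerSL ℂ v).comp_memLp' (Lp.memLp f)
    have h2 := ae_zero_of_fourierCoeff_eq_zero hmem (hcoeff v)
    filter_upwards [h2, hfg] with x h1 h3
    rw [← h3]
    exact h1
  have hball : ∀ᵐ x ∂torusMeasure, ∀ v ∈ c, (inner ℂ v (g x) : ℂ) = 0 :=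
    (ae_ball_iff hc).2 fun v _ => hae v
  apply Lp.ext (μ := torusMeasure)
  filter_upwards [hball, hfg, Lp.coeFn_zero E 2 torusMeasure] with x hx hfx h0
  rw [hfx, h0]
  have hgx : g x ∈ closure c := hsc (Set.mem_range_self x)
  have hclosed : IsClosed {v : E | (inner ℂ v (g x) : ℂ) = 0} :=
    isClosed_eq (continuous_id.inner continuous_const) continuous_const
  have hmem : g x ∈ {v : E | (inner ℂ v (g x) : ℂ) = 0} :=
    closure_minimal (fun v hv => hx v hv) hclosed hgx
  exact inner_self_eq_zero.mp hmem

end Aux3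


section Aux4

variable {E : Type*} [NormedAddCommGroup E] [InnerProductSpace ℂ E] [CompleteSpace E]

/-- The pointwise adjoint symbol `Ψ(x) = Θ(x)^*`. -/
def PsiSym (Θ : OneTorus → E →L[ℂ] E) : OneTorus → E →L[ℂ] E := fun x =>
  ContinuousLinearMap.adjoint (Θ x)

theorem psiSym_memℒp {Θ : OneTorus → E →L[ℂ] E} (hΘ : MemLp Θ ⊤ torusMeasure) :
    MemLp (PsiSym Θ) ⊤ torusMeasure := by
  constructor
  · exact ((ContinuousLinearMap.adjoint (𝕜 := ℂ) (E := E)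
      (F := E)).toLinearIsometry.continuous).comp_aestronglyMeasurable hΘ.1
  · have : eLpNorm (PsiSym Θ) ⊤ torusMeasure = eLpNorm Θ ⊤ torusMeasure := by
      apply eLpNorm_congr_norm_ae
      exact Eventually.of_forall fun x => LinearIsometryEquiv.norm_map _ _
    rw [this]
    exact hΘ.eLpNorm_lt_top

theorem psi_theta_apply {Θ : OneTorus → E →L[ℂ] E} {x : OneTorus}
    (hx : ∀ v : E, ‖Θ x v‖ = ‖v‖) (w : E) : PsiSym Θ x (Θ x w) = w := by
  have I : E →ₗᵢ[ℂ] E := ⟨(Θ x : E →ₗ[ℂ] E), hx⟩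
  apply ext_inner_left ℂ
  intro v
  rw [PsiSym, ContinuousLinearMap.adjoint_inner_right]
  exact LinearIsometry.inner_map_map ⟨(Θ x : E →ₗ[ℂ] E), hx⟩ v w

theorem psi_isometry_apply {Θ : OneTorus → E →L[ℂ] E} {x : OneTorus}
    (hx : ∀ v : E, ‖Θ x v‖ = ‖v‖) (hu : IsUnit (Θ x)) (v : E) :
    ‖PsiSym Θ x v‖ = ‖v‖ := by
  obtain ⟨U, hU⟩ := hu
  have hsurj : Θ x ((↑U⁻¹ : E →L[ℂ] E) v) = v := by
    rw [← hU, ← ContinuousLinearMap.mul_apply, U.mul_inv, ContinuousLinearMap.one_apply]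
  calc ‖PsiSym Θ x v‖ = ‖PsiSym Θ x (Θ x ((↑U⁻¹ : E →L[ℂ] E) v))‖ := by rw [hsurj]
    _ = ‖(↑U⁻¹ : E →L[ℂ] E) v‖ := by rw [psi_theta_apply hx]
    _ = ‖Θ x ((↑U⁻¹ : E →L[ℂ] E) v)‖ := (hx _).symm
    _ = ‖v‖ := by rw [hsurj]

theorem opMulLp_psi_theta {Θ : OneTorus → E →L[ℂ] E} (hΘ : MemLp Θ ⊤ torusMeasure)
    (hiso : ∀ᵐ x ∂torusMeasure, ∀ v : E, ‖Θ x v‖ = ‖v‖) (f : Lp E 2 torusMeasure) :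
    opMulLp (PsiSym Θ) (psiSym_memℒp hΘ) (opMulLp Θ hΘ f) = f := by
  apply Lp.ext
  filter_upwards [opMulLp_coeFn (PsiSym Θ) (psiSym_memℒp hΘ) (opMulLp Θ hΘ f),
    opMulLp_coeFn Θ hΘ f, hiso] with x h1 h2 hx
  rw [h1, h2, psi_theta_apply hx]

end Aux4


section Aux5

variable {E : Type*} [NormedAddCommGroup E] [InnerProductSpace ℂ E] [CompleteSpace E]

theorem MzL_pow_norm (n : ℕ) (f : Lp E 2 torusMeasure) : ‖((MzL E) ^ n) f‖ = ‖f‖ := by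
  induction n with
  | zero => simp
  | succ n ih =>
    rw [pow_succ', ContinuousLinearMap.mul_apply, MzL_norm, ih]

theorem MzL_pow_vecCharLp (n : ℕ) (k : ℤ) (v : E) :
    ((MzL E) ^ n) (vecCharLp E k v) = vecCharLp E (k + n) v := by
  induction n with
  | zero => simp
  | succ n ih =>
    rw [pow_succ', ContinuousLinearMap.mul_apply, ih, MzL_vecCharLp]
    congr 1
    push_cast
    ring

theorem MzL_pow_mem_hardy {n : ℕ} {f : Lp E 2 torusMeasure} (hf : f ∈ HardyDisc E) :
    ((MzL E) ^ n) f ∈ HardyDisc E := by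
  induction n with
  | zero => simpa using hf
  | succ n ih =>
    rw [pow_succ', ContinuousLinearMap.mul_apply]
    exact MzL_mem_hardy ih

theorem span_eventually_hardy (p : Lp E 2 torusMeasure)
    (hp : p ∈ Submodule.span ℂ (Set.range fun q : ℤ × E => vecCharLp E q.1 q.2)) :
    ∃ N : ℕ, ∀ n ≥ N, ((MzL E) ^ n) p ∈ HardyDisc E := by
  induction hp using Submodule.span_induction with
  | mem x hx =>
    obtain ⟨⟨k, v⟩, rfl⟩ := hx
    refine ⟨(-k).toNat, fun n hn => ?_⟩
    rw [MzL_pow_vecCharLp]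
    refine vecCharLp_mem_hardy ?_ v
    have h1 : (-k : ℤ) ≤ ((-k).toNat : ℤ) := Int.self_le_toNat _
    have h2 : ((-k).toNat : ℤ) ≤ (n : ℤ) := by exact_mod_cast hn
    omega
  | zero => exact ⟨0, fun n _ => by simp [Submodule.zero_mem]⟩
  | add x y _ _ ihx ihy =>
    obtain ⟨N₁, h₁⟩ := ihx
    obtain ⟨N₂, h₂⟩ := ihy
    refine ⟨max N₁ N₂, fun n hn => ?_⟩
    rw [map_add]
    exact Submodule.add_mem _ (h₁ n (le_trans (le_max_left _ _) hn))
      (h₂ n (le_trans (le_max_right _ _) hn))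
  | smul c x _ ih =>
    obtain ⟨N, hN⟩ := ih
    exact ⟨N, fun n hn => by rw [_root_.map_smul]; exact Submodule.smul_mem _ c (hN n hn)⟩

theorem hardy_dist (h : Lp E 2 torusMeasure) {ε : ℝ} (hε : 0 < ε) :
    ∃ N : ℕ, ∀ n ≥ N, ∃ g : HardyDisc E, ‖((MzL E) ^ n) h - ↑g‖ ≤ ε := by
  have hmem : h ∈ closure ((Submodule.span ℂ
      (Set.range fun q : ℤ × E => vecCharLp E q.1 q.2)) : Set (Lp E 2 torusMeasure)) := by
    have := span_intChar_dense (E := E)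
    have h2 : h ∈ (Submodule.span ℂ
        (Set.range fun q : ℤ × E => vecCharLp E q.1 q.2)).topologicalClosure := by
      rw [this]; trivial
    exact h2
  obtain ⟨p, hp, hdist⟩ := Metric.mem_closure_iff.1 hmem ε hε
  obtain ⟨N, hN⟩ := span_eventually_hardy p hp
  refine ⟨N, fun n hn => ⟨⟨((MzL E) ^ n) p, hN n hn⟩, ?_⟩⟩
  have : ((MzL E) ^ n) h - ((MzL E) ^ n) p = ((MzL E) ^ n) (h - p) := by rw [map_sub]
  rw [this, MzL_pow_norm]
  rw [dist_eq_norm] at hdist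
  exact le_of_lt hdist

end Aux5


set_option synthInstance.maxHeartbeats 1000000
set_option maxHeartbeats 1600000

section Aux6

variable {E : Type*} [NormedAddCommGroup E] [InnerProductSpace ℂ E] [CompleteSpace E]
  (Θ : OneTorus → E →L[ℂ] E) (hΘ : MemLp Θ ⊤ torusMeasure)
  (hmap : ∀ f : HardyDisc E, opMulLp Θ hΘ (f : Lp E 2 torusMeasure) ∈ HardyDisc E)

theorem discShift_coe (f : HardyDisc E) :
    (discShift E f : Lp E 2 torusMeasure) = MzL E ↑f := by
  have hmem : MzL E (f : Lp E 2 torusMeasure) ∈ HardyDisc E := MzL_mem_hardy f.2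
  have h1 : discShift E f = Submodule.orthogonalProjectionOnto (HardyDisc E) (MzL E ↑f) := rfl
  have h2 : Submodule.orthogonalProjectionOnto (HardyDisc E) (MzL E (f : Lp E 2 torusMeasure)) =
      (⟨MzL E ↑f, hmem⟩ : HardyDisc E) :=
    Submodule.orthogonalProjectionOnto_mem_subspace_eq_self (K := HardyDisc E) ⟨MzL E ↑f, hmem⟩
  rw [h1, h2]

theorem mem_thetaRange (g : HardyDisc E) :
    (⟨opMulLp Θ hΘ ↑g, hmap g⟩ : HardyDisc E) ∈ vecThetaRange Θ hΘ hmap :=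
  ⟨g, rfl⟩

theorem discShift_mem_model_orth {y : HardyDisc E}
    (hy : y ∈ (vecModelSpace Θ hΘ hmap)ᗮ) :
    discShift E y ∈ (vecModelSpace Θ hΘ hmap)ᗮ := by
  have hQ : (vecModelSpace Θ hΘ hmap)ᗮ = (vecThetaRange Θ hΘ hmap).topologicalClosure := by
    rw [vecModelSpace, Submodule.orthogonal_orthogonal_eq_closure]
  rw [hQ] at hy ⊢
  revert y hy
  suffices h : (vecThetaRange Θ hΘ hmap).topologicalClosure ≤
      Submodule.comap (discShift E : HardyDisc E →ₗ[ℂ] HardyDisc E)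
        (vecThetaRange Θ hΘ hmap).topologicalClosure by
    intro y hy; exact h hy
  refine Submodule.topologicalClosure_minimal _ ?_ ?_
  · rintro _ ⟨g, rfl⟩
    simp only [SetLike.mem_coe, Submodule.mem_comap, ContinuousLinearMap.coe_coe]
    have hcoe : (discShift E (⟨opMulLp Θ hΘ ↑g, hmap g⟩ : HardyDisc E) :
        Lp E 2 torusMeasure) = opMulLp Θ hΘ (MzL E ↑g) := by
      rw [discShift_coe]
      exact MzL_opMulLp_comm Θ hΘ ↑g
    have hg' : MzL E (g : Lp E 2 torusMeasure) ∈ HardyDisc E := MzL_mem_hardy g.2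
    have heq : discShift E (⟨opMulLp Θ hΘ ↑g, hmap g⟩ : HardyDisc E) =
        (⟨opMulLp Θ hΘ ↑(⟨MzL E ↑g, hg'⟩ : HardyDisc E),
          hmap ⟨MzL E ↑g, hg'⟩⟩ : HardyDisc E) := Subtype.ext hcoe
    show discShift E (⟨opMulLp Θ hΘ ↑g, hmap g⟩ : HardyDisc E) ∈ _
    rw [heq]
    exact Submodule.le_topologicalClosure _ (mem_thetaRange Θ hΘ hmap _)
  · exact IsClosed.preimage (discShift E).continuous
      (Submodule.isClosed_topologicalClosure _)


theorem model_shift_proj (z : HardyDisc E) :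
    vecModelShift Θ hΘ hmap (Submodule.orthogonalProjectionOnto (vecModelSpace Θ hΘ hmap) z) =
      Submodule.orthogonalProjectionOnto (vecModelSpace Θ hΘ hmap) (discShift E z) := by
  have h0 : vecModelShift Θ hΘ hmap (Submodule.orthogonalProjectionOnto (vecModelSpace Θ hΘ hmap) z) =
      Submodule.orthogonalProjectionOnto (vecModelSpace Θ hΘ hmap)
        (discShift E ↑(Submodule.orthogonalProjectionOnto (vecModelSpace Θ hΘ hmap) z)) := rfl
  rw [h0]
  have hcoe : (↑(Submodule.orthogonalProjectionOnto (vecModelSpace Θ hΘ hmap) z) : HardyDisc E) =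
      z - (z - ↑(Submodule.orthogonalProjectionOnto (vecModelSpace Θ hΘ hmap) z)) :=
    (sub_sub_cancel _ _).symm
  rw [hcoe, map_sub, map_sub]
  rw [Submodule.orthogonalProjectionOnto_apply_of_mem_orthogonal
    (discShift_mem_model_orth Θ hΘ hmap
      (y := z - ↑(Submodule.orthogonalProjectionOnto (vecModelSpace Θ hΘ hmap) z))
      (Submodule.sub_starProjection_mem_orthogonal z)), sub_zero]

theorem model_pow_coe (x : vecModelSpace Θ hΘ hmap) (n : ℕ) :
    ((vecModelShift Θ hΘ hmap) ^ n) x =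
      Submodule.orthogonalProjectionOnto (vecModelSpace Θ hΘ hmap)
        ⟨((MzL E) ^ n) ((x : HardyDisc E) : Lp E 2 torusMeasure),
          MzL_pow_mem_hardy (x : HardyDisc E).2⟩ := by
  induction n with
  | zero =>
    have h1 : (⟨((MzL E) ^ 0) ((x : HardyDisc E) : Lp E 2 torusMeasure),
        MzL_pow_mem_hardy (x : HardyDisc E).2⟩ : HardyDisc E) = (x : HardyDisc E) :=
      Subtype.ext (by simp)
    rw [h1, pow_zero, ContinuousLinearMap.one_apply,
      Submodule.orthogonalProjectionOnto_mem_subspace_eq_self]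
  | succ n ih =>
    rw [pow_succ', ContinuousLinearMap.mul_apply, ih, model_shift_proj]
    congr 1
    apply Subtype.ext
    rw [discShift_coe]
    show MzL E (((MzL E) ^ n) _) = ((MzL E) ^ (n + 1)) _
    rw [← ContinuousLinearMap.mul_apply, ← pow_succ']

theorem proj_norm_le_sub {H : Type*} [NormedAddCommGroup H] [InnerProductSpace ℂ H]
    (K : Submodule ℂ H) [CompleteSpace K] (z r : H) (hr : r ∈ Kᗮ) :
    ‖Submodule.orthogonalProjectionOnto K z‖ ≤ ‖z - r‖ := by
  have h1 : Submodule.orthogonalProjectionOnto K z = Submodule.orthogonalProjectionOnto K (z - r) := by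
    rw [map_sub, Submodule.orthogonalProjectionOnto_apply_of_mem_orthogonal hr, sub_zero]
  rw [h1]
  calc ‖Submodule.orthogonalProjectionOnto K (z - r)‖ ≤ ‖Submodule.orthogonalProjectionOnto K‖ * ‖z - r‖ :=
        (Submodule.orthogonalProjectionOnto K).le_opNorm _
    _ ≤ 1 * ‖z - r‖ :=
        mul_le_mul_of_nonneg_right (Submodule.orthogonalProjectionOnto_norm_le K) (norm_nonneg _)
    _ = ‖z - r‖ := one_mul _

theorem model_pow_norm_le (x : vecModelSpace Θ hΘ hmap) (n : ℕ) (g : HardyDisc E) :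
    ‖((vecModelShift Θ hΘ hmap) ^ n) x‖ ≤
      ‖((MzL E) ^ n) ((x : HardyDisc E) : Lp E 2 torusMeasure) - opMulLp Θ hΘ ↑g‖ := by
  rw [model_pow_coe]
  have hr : (⟨opMulLp Θ hΘ ↑g, hmap g⟩ : HardyDisc E) ∈ (vecModelSpace Θ hΘ hmap)ᗮ := by
    rw [show vecModelSpace Θ hΘ hmap = (vecThetaRange Θ hΘ hmap)ᗮ from rfl]
    exact Submodule.le_orthogonal_orthogonal _ (mem_thetaRange Θ hΘ hmap g)
  refine le_trans (proj_norm_le_sub _ _ _ hr) (le_of_eq ?_)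
  rw [Submodule.coe_norm, Submodule.coe_sub]

theorem MzL_pow_opMulLp_comm (Φ : OneTorus → E →L[ℂ] E) (hΦ : MemLp Φ ⊤ torusMeasure)
    (n : ℕ) (f : Lp E 2 torusMeasure) :
    ((MzL E) ^ n) (opMulLp Φ hΦ f) = opMulLp Φ hΦ (((MzL E) ^ n) f) := by
  induction n with
  | zero => simp
  | succ n ih =>
    rw [pow_succ', ContinuousLinearMap.mul_apply, ContinuousLinearMap.mul_apply, ih,
      MzL_opMulLp_comm]

theorem model_pow_small
    (hiso : ∀ᵐ x ∂torusMeasure, ∀ v : E, ‖Θ x v‖ = ‖v‖)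
    (hinv : ∀ᵐ x ∂torusMeasure, IsUnit (Θ x))
    (x : vecModelSpace Θ hΘ hmap) {ε : ℝ} (hε : 0 < ε) :
    ∃ n : ℕ, ‖((vecModelShift Θ hΘ hmap) ^ n) x‖ ≤ ε := by
  have hpsi : ∀ᵐ y ∂torusMeasure, ∀ v : E, ‖PsiSym Θ y v‖ = ‖v‖ := by
    filter_upwards [hiso, hinv] with y h1 h2
    exact psi_isometry_apply h1 h2
  obtain ⟨N, hN⟩ := hardy_dist
    (opMulLp (PsiSym Θ) (psiSym_memℒp hΘ) ((x : HardyDisc E) : Lp E 2 torusMeasure)) hε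
  obtain ⟨g, hg⟩ := hN N le_rfl
  refine ⟨N, le_trans (model_pow_norm_le Θ hΘ hmap x N g) ?_⟩
  have e1 : ‖((MzL E) ^ N) ((x : HardyDisc E) : Lp E 2 torusMeasure) - opMulLp Θ hΘ ↑g‖ =
      ‖opMulLp (PsiSym Θ) (psiSym_memℒp hΘ)
        (((MzL E) ^ N) ((x : HardyDisc E) : Lp E 2 torusMeasure) - opMulLp Θ hΘ ↑g)‖ :=
    (opMulLp_norm_of_isometry _ _ hpsi _).symm
  rw [e1, map_sub, opMulLp_psi_theta hΘ hiso, ← MzL_pow_opMulLp_comm]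
  exact hg

end Aux6

/-- Let `Θ ∈ H^∞_{B(E)}(𝔻)` be an inner multiplier (a.e. an isometry) with `Θ(e^{iθ})`
invertible a.e. If `T ∈ B(Q_Θ)` satisfies `S_Θ^* T S_Θ = T`, then `T = 0`. -/
theorem vecModelShift_invariant_eq_zero {E : Type*} [NormedAddCommGroup E]
    [InnerProductSpace ℂ E] [CompleteSpace E]
    (Θ : OneTorus → E →L[ℂ] E) (hΘ : MemLp Θ ⊤ torusMeasure)
    (hiso : ∀ᵐ x ∂torusMeasure, ∀ v : E, ‖Θ x v‖ = ‖v‖)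
    (hinv : ∀ᵐ x ∂torusMeasure, IsUnit (Θ x))
    (hmap : ∀ f : HardyDisc E, opMulLp Θ hΘ (f : Lp E 2 torusMeasure) ∈ HardyDisc E)
    (T : vecModelSpace Θ hΘ hmap →L[ℂ] vecModelSpace Θ hΘ hmap)
    (hT : vecModelShiftStar Θ hΘ hmap ∘L T ∘L vecModelShift Θ hΘ hmap = T) :
    T = 0 := by
  have hS : ∀ y, ‖vecModelShift Θ hΘ hmap y‖ ≤ ‖y‖ := by
    intro y
    have h0 : vecModelShift Θ hΘ hmap y =
        Submodule.orthogonalProjectionOnto (vecModelSpace Θ hΘ hmap) (discShift E ↑y) := rfl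
    rw [h0]
    refine le_trans (proj_norm_le_sub _ _ 0 (Submodule.zero_mem _)) ?_
    rw [sub_zero]
    have h1 : ‖discShift E (↑y : HardyDisc E)‖ = ‖(↑y : HardyDisc E)‖ := by
      rw [Submodule.coe_norm, discShift_coe, MzL_norm, ← Submodule.coe_norm]
    rw [h1, ← Submodule.coe_norm]
  letI : NormedAddCommGroup (HardyDisc E) := Submodule.normedAddCommGroup _
  have hSnorm : ‖vecModelShift Θ hΘ hmap‖ ≤ 1 :=
    ContinuousLinearMap.opNorm_le_bound _ zero_le_one (fun y => by
      rw [one_mul]; exact hS y)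
  have hSstarNorm : ‖vecModelShiftStar Θ hΘ hmap‖ ≤ 1 := by
    have : ‖vecModelShiftStar Θ hΘ hmap‖ = ‖vecModelShift Θ hΘ hmap‖ :=
      LinearIsometryEquiv.norm_map (ContinuousLinearMap.adjoint (𝕜 := ℂ)
        (E := ↥(vecModelSpace Θ hΘ hmap)) (F := ↥(vecModelSpace Θ hΘ hmap)))
        (vecModelShift Θ hΘ hmap)
    rw [this]; exact hSnorm
  have hSstar : ∀ y, ‖vecModelShiftStar Θ hΘ hmap y‖ ≤ ‖y‖ := fun y => by
    refine le_trans ((vecModelShiftStar Θ hΘ hmap).le_opNorm y) ?_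
    calc ‖vecModelShiftStar Θ hΘ hmap‖ * ‖y‖ ≤ 1 * ‖y‖ :=
          mul_le_mul_of_nonneg_right hSstarNorm (norm_nonneg _)
      _ = ‖y‖ := one_mul _
  have hpow : ∀ (n : ℕ) (y), ‖((vecModelShiftStar Θ hΘ hmap) ^ n) y‖ ≤ ‖y‖ := by
    intro n
    induction n with
    | zero => intro y; simp
    | succ n ih =>
      intro y
      rw [pow_succ', ContinuousLinearMap.mul_apply]
      exact le_trans (hSstar _) (ih y)
  have hiter : ∀ (n : ℕ) (x : vecModelSpace Θ hΘ hmap),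
      T x = ((vecModelShiftStar Θ hΘ hmap) ^ n)
        (T (((vecModelShift Θ hΘ hmap) ^ n) x)) := by
    intro n
    induction n with
    | zero => intro x; simp
    | succ n ih =>
      intro x
      calc T x = (vecModelShiftStar Θ hΘ hmap ∘L T ∘L vecModelShift Θ hΘ hmap) x := by
            rw [hT]
        _ = vecModelShiftStar Θ hΘ hmap (T (vecModelShift Θ hΘ hmap x)) := rfl
        _ = vecModelShiftStar Θ hΘ hmap (((vecModelShiftStar Θ hΘ hmap) ^ n)
              (T (((vecModelShift Θ hΘ hmap) ^ n) (vecModelShift Θ hΘ hmap x)))) := by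
            rw [← ih (vecModelShift Θ hΘ hmap x)]
        _ = ((vecModelShiftStar Θ hΘ hmap) ^ (n + 1))
              (T (((vecModelShift Θ hΘ hmap) ^ (n + 1)) x)) := by
            rw [pow_succ' (vecModelShiftStar Θ hΘ hmap), ContinuousLinearMap.mul_apply,
              pow_succ (vecModelShift Θ hΘ hmap), ContinuousLinearMap.mul_apply]
  apply ContinuousLinearMap.ext
  intro x
  rw [ContinuousLinearMap.zero_apply, ← norm_le_zero_iff]
  refine le_of_forall_pos_le_add ?_
  intro ε hε
  rw [zero_add]
  have hT1 : (0 : ℝ) < ‖T‖ + 1 := by positivity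
  have hε' : 0 < ε / (‖T‖ + 1) := div_pos hε hT1
  obtain ⟨n, hn⟩ := model_pow_small Θ hΘ hmap hiso hinv x hε'
  calc ‖T x‖ = ‖((vecModelShiftStar Θ hΘ hmap) ^ n)
        (T (((vecModelShift Θ hΘ hmap) ^ n) x))‖ := by rw [← hiter n x]
    _ ≤ ‖T (((vecModelShift Θ hΘ hmap) ^ n) x)‖ := hpow n _
    _ ≤ ‖T‖ * ‖((vecModelShift Θ hΘ hmap) ^ n) x‖ := T.le_opNorm _
    _ ≤ ‖T‖ * (ε / (‖T‖ + 1)) := mul_le_mul_of_nonneg_left hn (norm_nonneg T)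
    _ ≤ (‖T‖ + 1) * (ε / (‖T‖ + 1)) :=
        mul_le_mul_of_nonneg_right (by linarith) (le_of_lt hε')
    _ = ε := by field_simp
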